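/- Let 0 < γ ≤ δ ≤ 1/9 and let ω be the explicit modulus of continuity ω(ξ) = ξ − ξ^{3/2} for 0 ≤ ξ ≤ δ and ω(ξ) = δ − δ^{3/2} + γ log(1 + (1/4) log(ξ/δ)) for ξ > δ. Let A > 0 with γ < 1/(2πA), let F ≥ 0 and B > 0, set d = 2π√2, and assume ω(Bd)/d ≥ 4πF. Then for every ξ ∈ (0, d]: A γ ω(Bξ)/ξ + 2F − (1/π) ω(Bξ)/ξ < 0. -/

import Mathlib

/-!
The ratio `ω(x)/x` is nonincreasing on `(0, ∞)`: below `δ` it equals `1 − √x`; above `δ` the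
logarithmic branch gains at most `γ/4 · (b/a − 1)` from `a` to `b`, which the value
`ω(δ) = δ(1 − √δ) ≥ γ/4` absorbs. Hence `ω(Bξ)/ξ ≥ ω(Bd)/d ≥ 4πF` for `ξ ≤ d`, and since
`ω > 0` and `2πAγ < 1`, both `Aγ ω(Bξ)/ξ` and `2F` are at most half of `ω(Bξ)/(πξ)`, the first
strictly.
-/

open Real

noncomputable section

/-- The explicit modulus of continuity of Kiselev–Nazarov–Volberg:
`ω(ξ) = ξ − ξ^{3/2}` for `0 ≤ ξ ≤ δ`, and
`ω(ξ) = δ − δ^{3/2} + γ log(1 + (1/4) log(ξ/δ))` for `ξ > δ`. -/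
def qgModulus (γ δ : ℝ) (ξ : ℝ) : ℝ :=
  if ξ ≤ δ then ξ - ξ ^ ((3:ℝ)/2)
  else δ - δ ^ ((3:ℝ)/2) + γ * Real.log (1 + (1/4) * Real.log (ξ / δ))

open Set

theorem rpow_three_halves_eq_mul_sqrt {x : ℝ} (hx : 0 ≤ x) : x ^ ((3:ℝ)/2) = x * √x := by
  rw [sqrt_eq_rpow, show (3:ℝ)/2 = 1 + 1/2 by norm_num, rpow_add' hx (by norm_num), rpow_one]

theorem sqrt_le_one_third {x : ℝ} (hx : x ≤ 1/9) : √x ≤ 1/3 :=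
  sqrt_le_iff.mpr ⟨by norm_num, by linarith⟩

theorem log_sub_log_le_sub {u v : ℝ} (hu : 1 ≤ u) (huv : u ≤ v) : log v - log u ≤ v - u := by
  have hu0 : 0 < u := by linarith
  have hv0 : 0 < v := hu0.trans_le huv
  calc log v - log u = log (v / u) := (log_div hv0.ne' hu0.ne').symm
    _ ≤ v / u - 1 := log_le_sub_one_of_pos (div_pos hv0 hu0)
    _ ≤ v - u := by
      rw [div_sub_one hu0.ne', div_le_iff₀ hu0]
      nlinarith

theorem log_one_add_log_div_sub_le {δ a b : ℝ} (hδ : 0 < δ) (hδa : δ ≤ a) (hab : a ≤ b) :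
    log (1 + (1/4) * log (b / δ)) - log (1 + (1/4) * log (a / δ)) ≤ (b / a - 1) / 4 := by
  have ha : 0 < a := hδ.trans_le hδa
  have hlog_ba : log (b / δ) = log (b / a) + log (a / δ) := by
    rw [← log_mul (div_pos (ha.trans_le hab) ha).ne' (div_pos ha hδ).ne']
    field_simp
  have hlog_ad := log_nonneg ((one_le_div hδ).mpr hδa)
  have hlog_ba_nonneg := log_nonneg ((one_le_div ha).mpr hab)
  calc _ ≤ (1 + (1/4) * log (b / δ)) - (1 + (1/4) * log (a / δ)) :=
        log_sub_log_le_sub (by linarith) (by linarith)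
    _ = (1/4) * log (b / a) := by rw [hlog_ba]; ring
    _ ≤ (b / a - 1) / 4 := by linarith [log_le_sub_one_of_pos (div_pos (ha.trans_le hab) ha)]

theorem div_le_div_of_mul_sub_le {f : ℝ → ℝ} {a b : ℝ} (ha : 0 < a) (hab : a ≤ b)
    (h : a * (f b - f a) ≤ (b - a) * f a) : f b / b ≤ f a / a := by
  rw [div_le_div_iff₀ (ha.trans_le hab) ha]
  linarith

theorem AntitoneOn.div_comp_const_mul {f : ℝ → ℝ} (hf : AntitoneOn (fun x => f x / x) (Ioi 0))
    {B : ℝ} (hB : 0 < B) : AntitoneOn (fun x => f (B * x) / x) (Ioi 0) := by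
  intro a (ha : 0 < a) b (hb : 0 < b) hab
  have h := hf (mul_pos hB ha) (mul_pos hB hb) (mul_le_mul_of_nonneg_left hab hB.le)
  dsimp only at h ⊢
  rwa [div_mul_eq_div_div_swap, div_mul_eq_div_div_swap, div_le_div_iff_of_pos_right hB] at h

section

variable {γ δ : ℝ}

theorem qgModulus_of_le {ξ : ℝ} (hξ : 0 ≤ ξ) (h : ξ ≤ δ) :
    qgModulus γ δ ξ = ξ * (1 - √ξ) := by
  rw [qgModulus, if_pos h, rpow_three_halves_eq_mul_sqrt hξ]
  ring

theorem qgModulus_of_ge (hδ : 0 ≤ δ) {ξ : ℝ} (h : δ ≤ ξ) :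
    qgModulus γ δ ξ = δ * (1 - √δ) + γ * log (1 + (1/4) * log (ξ / δ)) := by
  rcases h.eq_or_lt with rfl | h
  · rw [qgModulus_of_le hδ le_rfl]
    rcases eq_or_ne δ 0 with rfl | hδ0 <;> simp [*]
  · rw [qgModulus, if_neg h.not_ge, rpow_three_halves_eq_mul_sqrt hδ]
    ring

theorem qgModulus_pos (hγ : 0 ≤ γ) (hδ0 : 0 < δ) (hδ : δ ≤ 1/9) {ξ : ℝ} (hξ : 0 < ξ) :
    0 < qgModulus γ δ ξ := by
  rcases le_total ξ δ with h | h
  · rw [qgModulus_of_le hξ.le h]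
    nlinarith [sqrt_le_one_third (h.trans hδ)]
  · rw [qgModulus_of_ge hδ0.le h]
    have := log_nonneg (show 1 ≤ 1 + (1/4) * log (ξ / δ) by
      linarith [log_nonneg ((one_le_div hδ0).mpr h)])
    nlinarith [sqrt_le_one_third hδ]

theorem antitoneOn_qgModulus_div_Ioc :
    AntitoneOn (fun ξ => qgModulus γ δ ξ / ξ) (Ioc 0 δ) := by
  intro a ⟨ha, haδ⟩ b ⟨hb, hbδ⟩ hab
  dsimp only
  rw [qgModulus_of_le ha.le haδ, qgModulus_of_le hb.le hbδ, mul_div_cancel_left₀ _ ha.ne',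
    mul_div_cancel_left₀ _ hb.ne']
  linarith [sqrt_le_sqrt hab]

theorem antitoneOn_qgModulus_div_Ici (hγ : 0 ≤ γ) (hγδ : γ ≤ δ) (hδ0 : 0 < δ) (hδ : δ ≤ 1/9) :
    AntitoneOn (fun ξ => qgModulus γ δ ξ / ξ) (Ici δ) := by
  intro a (ha : δ ≤ a) b (hb : δ ≤ b) hab
  have ha0 := hδ0.trans_le ha
  refine div_le_div_of_mul_sub_le ha0 hab ?_
  have hlog := log_one_add_log_div_sub_le hδ0 ha hab
  have hlog_nonneg := log_nonneg (show 1 ≤ 1 + (1/4) * log (a / δ) by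
    linarith [log_nonneg ((one_le_div hδ0).mpr ha)])
  have hγ_le : γ / 4 ≤ δ * (1 - √δ) := by nlinarith [sqrt_le_one_third hδ]
  have hγ_quarter : a * (γ * ((b / a - 1) / 4)) = γ * (b - a) / 4 := by
    field_simp
  rw [qgModulus_of_ge hδ0.le ha, qgModulus_of_ge hδ0.le hb]
  calc _ = a * (γ * (log (1 + (1/4) * log (b / δ)) - log (1 + (1/4) * log (a / δ)))) := by ring
    _ ≤ γ * (b - a) / 4 := by
      rw [← hγ_quarter]
      gcongr
    _ ≤ _ := by
      nlinarith [mul_nonneg (sub_nonneg.mpr hab) (mul_nonneg hγ hlog_nonneg),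
        mul_le_mul_of_nonneg_left hγ_le (sub_nonneg.mpr hab)]

theorem antitoneOn_qgModulus_div (hγ : 0 ≤ γ) (hγδ : γ ≤ δ) (hδ0 : 0 < δ) (hδ : δ ≤ 1/9) :
    AntitoneOn (fun ξ => qgModulus γ δ ξ / ξ) (Ioi 0) := by
  rw [← Ioc_union_Ici_eq_Ioi hδ0]
  exact antitoneOn_qgModulus_div_Ioc.union_right (antitoneOn_qgModulus_div_Ici hγ hγδ hδ0 hδ)
    ⟨right_mem_Ioc.mpr hδ0, fun _ h => h.2⟩ isLeast_Ici

end

theorem large_scale_negativity_general (γ δ A F B : ℝ)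
    (hγ : 0 < γ) (hγδ : γ ≤ δ) (hδ : δ ≤ 1/9)
    (hA : 0 < A) (hγA : γ < 1 / (2 * Real.pi * A)) (hB : 0 < B)
    (hωd : qgModulus γ δ (B * (2 * Real.pi * Real.sqrt 2)) / (2 * Real.pi * Real.sqrt 2)
            ≥ 4 * Real.pi * F) :
    ∀ ξ : ℝ, 0 < ξ → ξ ≤ 2 * Real.pi * Real.sqrt 2 →
      A * γ * (qgModulus γ δ (B * ξ) / ξ) + 2 * F
        - (1 / Real.pi) * (qgModulus γ δ (B * ξ) / ξ) < 0 := by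
  intro ξ hξ hξd
  have hδ0 : 0 < δ := hγ.trans_le hγδ
  have hm : 0 < qgModulus γ δ (B * ξ) / ξ :=
    div_pos (qgModulus_pos hγ.le hδ0 hδ (mul_pos hB hξ)) hξ
  have hFm : 4 * π * F ≤ qgModulus γ δ (B * ξ) / ξ :=
    hωd.trans ((antitoneOn_qgModulus_div hγ.le hγδ hδ0 hδ).div_comp_const_mul hB hξ
      (hξ.trans_le hξd) hξd)
  have hAγ : 2 * π * A * γ < 1 := by
    rw [lt_div_iff₀ (by positivity)] at hγA
    linarith
  generalize qgModulus γ δ (B * ξ) / ξ = m at hm hFm ⊢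
  have hπ := pi_pos
  rw [show A * γ * m + 2 * F - 1 / π * m = (2 * π * A * γ * m + 4 * π * F - 2 * m) / (2 * π) by
    field_simp; ring]
  exact div_neg_of_neg_of_pos (by nlinarith) (by positivity)

/-- Large-scale negativity estimate: with `d = 2π√2`, `γ < 1/(2πA)` and
`ω(Bd)/d ≥ 4πF`, for every `ξ ∈ (0, d]` one has
`A γ ω(Bξ)/ξ + 2F − (1/π) ω(Bξ)/ξ < 0`. -/
theorem large_scale_negativity (γ δ A F B : ℝ)
    (hγ : 0 < γ) (hγδ : γ ≤ δ) (hδ : δ ≤ 1/9)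
    (hA : 0 < A) (hγA : γ < 1 / (2 * Real.pi * A)) (hF : 0 ≤ F) (hB : 0 < B)
    (hωd : qgModulus γ δ (B * (2 * Real.pi * Real.sqrt 2)) / (2 * Real.pi * Real.sqrt 2)
            ≥ 4 * Real.pi * F) :
    ∀ ξ : ℝ, 0 < ξ → ξ ≤ 2 * Real.pi * Real.sqrt 2 →
      A * γ * (qgModulus γ δ (B * ξ) / ξ) + 2 * F
        - (1 / Real.pi) * (qgModulus γ δ (B * ξ) / ξ) < 0 :=
  large_scale_negativity_general γ δ A F B hγ hγδ hδ hA hγA hB hωd
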